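/- arXiv:math/0512529 — 4 statements merged into one kernel-verified Lean document; each statement's English description precedes it below -/
import Mathlib

section
/- For a convex N-gon with N = m(k-2)+2 (k ≥ 3, m ≥ 1), the number of k-allowable diagonals, i.e. diagonals that can appear in some dissection of the N-gon into m convex k-gons, equals (m-1)·N/2. -/
/-- The number of `k`-allowable diagonals of a convex `N`-gon, `N = m(k-2)+2`,
equals `(m-1)·N/2`.  A diagonal is `k`-allowable iff it connects a vertex `x`
with a vertex `x + (k-1) + j(k-2) (mod N)` for some `0 ≤ j ≤ m-2`. -/
theorem numAllowableDiagonals (k m N : ℕ) [NeZero N] (hk : 3 ≤ k) (hm : 1 ≤ m)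
    (hN : N = m * (k - 2) + 2) :
    {d : Sym2 (ZMod N) | ∃ x : ZMod N, ∃ j : ℕ, j < m - 1 ∧
        d = s(x, x + ((k - 1 : ℕ) : ZMod N) + ((j * (k - 2) : ℕ) : ZMod N))}.ncard
      = (m - 1) * N / 2 := by
  rcases eq_or_lt_of_le hm with h1 | hm2
  · -- case m = 1 : the set is empty
    have hempty : {d : Sym2 (ZMod N) | ∃ x : ZMod N, ∃ j : ℕ, j < m - 1 ∧
        d = s(x, x + ((k - 1 : ℕ) : ZMod N) + ((j * (k - 2) : ℕ) : ZMod N))} = ∅ := by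
      ext d
      simp only [Set.mem_setOf_eq, Set.mem_empty_iff_false, iff_false, not_exists]
      rintro x j ⟨hj, -⟩
      omega
    rw [hempty, Set.ncard_empty, ← h1]
    simp
  · -- main case : 2 ≤ m
    obtain ⟨t, rfl⟩ : ∃ t, m = t + 2 := ⟨m - 2, by omega⟩
    obtain ⟨a, rfl⟩ : ∃ a, k = a + 3 := ⟨k - 3, by omega⟩
    have e1 : a + 3 - 1 = a + 2 := by omega
    have e2 : a + 3 - 2 = a + 1 := by omega
    rw [e2] at hN
    -- basic facts about the offsets c n = (a+2) + n*(a+1)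
    have hval : ∀ n : ℕ, n ≤ t → (a + 2) + n * (a + 1) < N := by
      intro n hn
      have h1 : n * (a + 1) ≤ t * (a + 1) := Nat.mul_le_mul_right _ hn
      have h2 : (t + 2) * (a + 1) = t * (a + 1) + 2 * a + 2 := by ring
      rw [hN]
      linarith
    have hsum : ∀ n : ℕ, n ≤ t →
        ((a + 2) + n * (a + 1)) + ((a + 2) + (t - n) * (a + 1)) = N := by
      intro n hn
      have h1 : n * (a + 1) + (t - n) * (a + 1) = t * (a + 1) := by
        rw [← add_mul]; congr 1; omega
      have h2 : (t + 2) * (a + 1) = t * (a + 1) + 2 * (a + 1) := by ring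
      rw [hN]
      linarith
    have hinj : ∀ n n' : ℕ, n ≤ t → n' ≤ t →
        (((a + 2) + n * (a + 1) : ℕ) : ZMod N) = (((a + 2) + n' * (a + 1) : ℕ) : ZMod N) →
        n = n' := by
      intro n n' hn hn' h
      have h3 : (a + 2) + n * (a + 1) = (a + 2) + n' * (a + 1) := by
        rw [← ZMod.val_cast_of_lt (hval n hn), h, ZMod.val_cast_of_lt (hval n' hn')]
      have h4 : n * (a + 1) = n' * (a + 1) := Nat.add_left_cancel h3
      exact Nat.eq_of_mul_eq_mul_right (by omega) h4
    have hCne : ∀ n : ℕ, n ≤ t → (((a + 2) + n * (a + 1) : ℕ) : ZMod N) ≠ 0 := by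
      intro n hn h
      have h1 := ZMod.val_cast_of_lt (hval n hn)
      rw [h, ZMod.val_zero] at h1
      omega
    have hopp : ∀ n n' : ℕ, n ≤ t → n' ≤ t →
        (((a + 2) + n * (a + 1) : ℕ) : ZMod N) + (((a + 2) + n' * (a + 1) : ℕ) : ZMod N) = 0 →
        n' = t - n := by
      intro n n' hn hn' h
      rw [← Nat.cast_add, ZMod.natCast_eq_zero_iff] at h
      have hu := hval n hn
      have hv := hval n' hn'
      have hN2 : ((a + 2) + n * (a + 1)) + ((a + 2) + n' * (a + 1)) = N := by
        rcases h with ⟨c, hc⟩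
        have hc1 : 0 < ((a + 2) + n * (a + 1)) + ((a + 2) + n' * (a + 1)) := by positivity
        have hc2 : ((a + 2) + n * (a + 1)) + ((a + 2) + n' * (a + 1)) < 2 * N := by omega
        have hc3 : c = 1 := by
          rcases Nat.lt_or_ge c 1 with h' | h'
          · (interval_cases c; omega)
          · rcases Nat.lt_or_ge c 2 with h'' | h''
            · omega
            · exfalso; rw [hc] at hc2; nlinarith [Nat.pos_of_ne_zero (NeZero.ne N)]
        rw [hc, hc3, mul_one]
      have h5 := hsum n hn
      have h6 : (a + 2) + n' * (a + 1) = (a + 2) + (t - n) * (a + 1) :=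
        Nat.add_left_cancel (by rw [hN2, h5])
      exact hinj n' (t - n) hn' (by omega) (by rw [h6])
    -- the counting map
    set F : ZMod N × Fin (t + 1) → Sym2 (ZMod N) :=
      fun p => s(p.1, p.1 + (((a + 2) + (p.2 : ℕ) * (a + 1) : ℕ) : ZMod N)) with hF
    classical
    -- identify the set with the image of F
    have hcast : ∀ (x : ZMod N) (n : ℕ),
        x + ((a + 3 - 1 : ℕ) : ZMod N) + ((n * (a + 3 - 2) : ℕ) : ZMod N)
          = x + (((a + 2) + n * (a + 1) : ℕ) : ZMod N) := by
      intro x n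
      rw [e1, e2]
      push_cast
      ring
    have hS : {d : Sym2 (ZMod N) | ∃ x : ZMod N, ∃ j : ℕ, j < t + 2 - 1 ∧
        d = s(x, x + ((a + 3 - 1 : ℕ) : ZMod N) + ((j * (a + 3 - 2) : ℕ) : ZMod N))}
        = ↑(Finset.univ.image F) := by
      ext d
      simp only [Set.mem_setOf_eq, Finset.coe_image, Set.mem_image, Finset.mem_coe,
        Finset.mem_univ, true_and, Finset.coe_univ, Set.image_univ, Set.mem_range]
      constructor
      · rintro ⟨x, j, hj, rfl⟩
        refine ⟨(x, ⟨j, by omega⟩), ?_⟩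
        rw [hF]
        simp only
        rw [hcast]
      · rintro ⟨⟨x, j⟩, rfl⟩
        refine ⟨x, j.1, by omega, ?_⟩
        rw [hF]
        simp only
        rw [hcast]
    -- every fiber of F has exactly two elements
    have hfix : ∀ p : ZMod N × Fin (t + 1),
        F (p.1 + (((a + 2) + (p.2 : ℕ) * (a + 1) : ℕ) : ZMod N),
            ⟨t - (p.2 : ℕ), by omega⟩) = F p := by
      rintro ⟨x, j⟩
      have hj : (j : ℕ) ≤ t := by omega
      have hz : (((a + 2) + (j : ℕ) * (a + 1) : ℕ) : ZMod N)
          + (((a + 2) + (t - (j : ℕ)) * (a + 1) : ℕ) : ZMod N) = 0 := by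
        rw [← Nat.cast_add, hsum (j : ℕ) hj, ZMod.natCast_self]
      rw [hF]
      simp only
      rw [add_assoc x, hz, add_zero]
      exact Sym2.eq_swap
    have hfiber : ∀ p q : ZMod N × Fin (t + 1), F q = F p →
        q = p ∨ q = (p.1 + (((a + 2) + (p.2 : ℕ) * (a + 1) : ℕ) : ZMod N),
            ⟨t - (p.2 : ℕ), by omega⟩) := by
      rintro ⟨x, j⟩ ⟨y, i⟩ h
      rw [hF] at h
      simp only at h
      have hj : (j : ℕ) ≤ t := by omega
      have hi : (i : ℕ) ≤ t := by omega
      rw [Sym2.eq_iff] at h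
      rcases h with ⟨h1, h2⟩ | ⟨h1, h2⟩
      · left
        subst h1
        have h3 := add_left_cancel h2
        have h4 := hinj _ _ hi hj h3
        exact Prod.ext rfl (Fin.ext h4)
      · right
        subst h1
        rw [add_assoc x] at h2
        have h3 : (((a + 2) + (j : ℕ) * (a + 1) : ℕ) : ZMod N)
            + (((a + 2) + (i : ℕ) * (a + 1) : ℕ) : ZMod N) = 0 := by
          have := add_eq_left.mp h2
          exact this
        have h4 := hopp _ _ hj hi h3
        exact Prod.ext rfl (Fin.ext h4)
    have hne : ∀ p : ZMod N × Fin (t + 1),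
        (p.1 + (((a + 2) + (p.2 : ℕ) * (a + 1) : ℕ) : ZMod N),
            (⟨t - (p.2 : ℕ), by omega⟩ : Fin (t + 1))) ≠ p := by
      rintro ⟨x, j⟩ h
      have h1 := congrArg Prod.fst h
      simp only at h1
      have h2 : (((a + 2) + (j : ℕ) * (a + 1) : ℕ) : ZMod N) = 0 := by
        have := h1
        rwa [add_eq_left] at this
      exact hCne (j : ℕ) (by omega) h2
    have hfib : ∀ d ∈ Finset.univ.image F,
        (Finset.univ.filter (fun q => F q = d)).card = 2 := by
      intro d hd
      obtain ⟨p, -, rfl⟩ := Finset.mem_image.mp hd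
      have hfe : Finset.univ.filter (fun q => F q = F p)
          = {p, (p.1 + (((a + 2) + (p.2 : ℕ) * (a + 1) : ℕ) : ZMod N),
              ⟨t - (p.2 : ℕ), by omega⟩)} := by
        ext q
        simp only [Finset.mem_filter, Finset.mem_univ, true_and, Finset.mem_insert,
          Finset.mem_singleton]
        constructor
        · intro hq
          exact hfiber p q hq
        · rintro (rfl | rfl)
          · rfl
          · exact hfix p
      rw [hfe]
      exact Finset.card_pair (fun h => hne p h.symm)
    have key : (Finset.univ.image F).card * 2 = N * (t + 1) := by
      calc (Finset.univ.image F).card * 2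
          = ∑ _d ∈ Finset.univ.image F, 2 := by
            rw [Finset.sum_const, smul_eq_mul, mul_comm]
        _ = ∑ d ∈ Finset.univ.image F,
              (Finset.univ.filter (fun q => F q = d)).card :=
            Finset.sum_congr rfl (fun d hd => (hfib d hd).symm)
        _ = (Finset.univ : Finset (ZMod N × Fin (t + 1))).card :=
            (Finset.card_eq_sum_card_image F Finset.univ).symm
        _ = N * (t + 1) := by simp [ZMod.card]
    rw [hS, Set.ncard_coe_finset]
    have h7 : t + 2 - 1 = t + 1 := rfl
    rw [h7]
    rw [show (t + 1) * N = (Finset.univ.image F).card * 2 by rw [key, mul_comm]]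
    exact (Nat.mul_div_cancel _ (by norm_num)).symm
end

section
/- Let d be even and n ≥ d. The number of lower facets of the cyclic polytope C_d(n) equals C(n - d/2, d/2); equivalently, with r = n-d and s = d/2 + 1, it equals the number of weak compositions of r into s parts, C(r+s-1, s-1). -/
def lfSet (m n : ℕ) : Set (Fin m → ℕ) :=
  {i | (∀ t, 1 ≤ i t) ∧ (∀ u t, u < t → i u + 2 ≤ i t) ∧ (∀ t, i t + 1 ≤ n)}

lemma lf_chain {m n : ℕ} {i : Fin m → ℕ} (hi : i ∈ lfSet m n) :
    ∀ (a b : Fin m), a.val ≤ b.val → i a + 2 * (b.val - a.val) ≤ i b := by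
  have key : ∀ v (a b : Fin m), a.val + v = b.val → i a + 2 * v ≤ i b := by
    intro v
    induction v with
    | zero =>
      intro a b h
      have : a = b := Fin.ext (by omega)
      subst this; omega
    | succ v ih =>
      intro a b h
      have hb' : a.val + v < m := by omega
      have h1 := ih a ⟨a.val + v, hb'⟩ rfl
      have h2 := hi.2.1 ⟨a.val + v, hb'⟩ b (by rw [Fin.lt_def]; simp; omega)
      omega
  intro a b hab
  have := key (b.val - a.val) a b (by omega)
  omega

lemma lf_lower {m n : ℕ} {i : Fin m → ℕ} (hi : i ∈ lfSet m n) (t : Fin m) :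
    1 + 2 * t.val ≤ i t := by
  have ht := t.isLt
  have h := lf_chain hi ⟨0, by omega⟩ t (by simp)
  have h1 := hi.1 ⟨0, by omega⟩
  simp at h
  omega

lemma lf_upper {m n : ℕ} {i : Fin m → ℕ} (hi : i ∈ lfSet m n) (t : Fin m) :
    i t + 2 * (m - 1 - t.val) + 1 ≤ n := by
  have ht := t.isLt
  have h := lf_chain hi t ⟨m - 1, by omega⟩ (by simp; omega)
  have h1 := hi.2.2 ⟨m - 1, by omega⟩
  simp at h
  omega

def jfun {m n : ℕ} {i : Fin m → ℕ} (hi : i ∈ lfSet m n) (t : Fin m) : Fin (n - m) :=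
  ⟨i t - t.val - 1, by
    have h1 := lf_lower hi t
    have h2 := lf_upper hi t
    have ht := t.isLt
    omega⟩

lemma jfun_strictMono {m n : ℕ} {i : Fin m → ℕ} (hi : i ∈ lfSet m n) :
    StrictMono (jfun hi) := by
  intro a b hab
  have hab' : a.val < b.val := hab
  have h := lf_chain hi a b (le_of_lt hab')
  have hl := lf_lower hi a
  rw [Fin.lt_def]
  show i a - a.val - 1 < i b - b.val - 1
  omega


lemma inv_mem (m n : ℕ) (s : Finset (Fin (n - m))) (hs : s.card = m) :
    (fun t : Fin m => (s.orderEmbOfFin hs t).val + t.val + 1) ∈ lfSet m n := by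
  refine ⟨fun t => ?_, fun u t hut => ?_, fun t => ?_⟩
  · show 1 ≤ (s.orderEmbOfFin hs t).val + t.val + 1
    omega
  · show (s.orderEmbOfFin hs u).val + u.val + 1 + 2 ≤ (s.orderEmbOfFin hs t).val + t.val + 1
    have h1 : (s.orderEmbOfFin hs u : Fin (n - m)) < s.orderEmbOfFin hs t :=
      (s.orderEmbOfFin hs).strictMono hut
    have h2 : (s.orderEmbOfFin hs u).val < (s.orderEmbOfFin hs t).val := h1
    have h3 : u.val < t.val := hut
    omega
  · show (s.orderEmbOfFin hs t).val + t.val + 1 + 1 ≤ n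
    have h1 := (s.orderEmbOfFin hs t).isLt
    have h2 := t.isLt
    omega

noncomputable def lfEquiv (m n : ℕ) :
    (lfSet m n) ≃ {s : Finset (Fin (n - m)) // s.card = m} where
  toFun := fun ⟨i, hi⟩ =>
    ⟨Finset.univ.image (jfun hi), by
      rw [Finset.card_image_of_injective _ (jfun_strictMono hi).injective,
        Finset.card_univ, Fintype.card_fin]⟩
  invFun := fun ⟨s, hs⟩ =>
    ⟨fun t => (s.orderEmbOfFin hs t).val + t.val + 1, inv_mem m n s hs⟩
  left_inv := by
    rintro ⟨i, hi⟩
    apply Subtype.ext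
    funext t
    have hcard : (Finset.univ.image (jfun hi)).card = m := by
      rw [Finset.card_image_of_injective _ (jfun_strictMono hi).injective,
        Finset.card_univ, Fintype.card_fin]
    have hj := Finset.orderEmbOfFin_unique hcard
      (f := jfun hi) (fun x => Finset.mem_image_of_mem _ (Finset.mem_univ x))
      (jfun_strictMono hi)
    show ((Finset.univ.image (jfun hi)).orderEmbOfFin _ t).val + t.val + 1 = i t
    rw [← congrFun hj t]
    show i t - t.val - 1 + t.val + 1 = i t
    have := lf_lower hi t
    omega
  right_inv := by
    rintro ⟨s, hs⟩
    apply Subtype.ext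
    show Finset.univ.image _ = s
    apply Finset.coe_injective
    rw [Finset.coe_image, Finset.coe_univ, Set.image_univ]
    have hfun : (jfun (m := m) (n := n) (i := fun t => (s.orderEmbOfFin hs t).val + t.val + 1)
        (inv_mem m n s hs)) = ⇑(s.orderEmbOfFin hs) := by
      funext t
      apply Fin.ext
      show (s.orderEmbOfFin hs t).val + t.val + 1 - t.val - 1 = (s.orderEmbOfFin hs t).val
      omega
    rw [hfun]
    exact Finset.range_orderEmbOfFin s hs

lemma lf_ncard (m n : ℕ) : (lfSet m n).ncard = (n - m).choose m := by
  rw [← Nat.card_coe_set_eq, Nat.card_congr (lfEquiv m n), Nat.card_eq_fintype_card,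
    Fintype.card_finset_len, Fintype.card_fin]

/-- For `d` even and `n ≥ d`, the number of lower facets of the cyclic polytope
`C_d(n)` — i.e. the number of index sets `I ⊂ [n]` of size `d` that are
disjoint unions of `d/2` pairs of consecutive integers `{i_t, i_t + 1}` with
`i_t + 2 ≤ i_{t+1}`, here recorded by the increasing sequence `i` of left pair
endpoints — equals `C(n - d/2, d/2)`; equivalently, with `r = n - d` and
`s = d/2 + 1`, it equals the number `C(r+s-1, s-1)` of weak compositions of
`r` into `s` parts. -/
theorem card_lowerFacets_cyclic (d n : ℕ) (hd : Even d) (hdn : d ≤ n) :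
    {i : Fin (d / 2) → ℕ |
        (∀ t, 1 ≤ i t) ∧ (∀ u t, u < t → i u + 2 ≤ i t) ∧ (∀ t, i t + 1 ≤ n)}.ncard
        = (n - d / 2).choose (d / 2) ∧
      (n - d / 2).choose (d / 2)
        = ((n - d) + (d / 2 + 1) - 1).choose ((d / 2 + 1) - 1) := by
  obtain ⟨c, rfl⟩ := hd
  have hc : (c + c) / 2 = c := by omega
  constructor
  · exact lf_ncard ((c + c) / 2) n
  · have h1 : n - (c + c) + ((c + c) / 2 + 1) - 1 = n - (c + c) / 2 := by omega
    have h2 : (c + c) / 2 + 1 - 1 = (c + c) / 2 := by omega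
    rw [h1, h2]
end

section
/- Let σ_1,...,σ_g ⊂ [h] be nonempty subsets, and consider the simplex σ = conv ⋃_{i=1}^g { μ_i(v) × e_i : v ∈ σ_i } ⊂ ℝ^{gh} × ℝ^g. Then the intersection of σ with the affine plane L = ℝ^{gh} × (1/g,...,1/g) equals (1/g)(μ_1(Δ_{σ_1}) + ... + μ_g(Δ_{σ_g})) × (1/g,...,1/g), which is affinely isomorphic to the product Δ_{σ_1} × ... × Δ_{σ_g}. Moreover, if some σ_j = ∅, the corresponding simplex does not intersect L at all. -/
/-- Let `σ₁,…,σ_g ⊂ [h]` and let `σ ⊂ ℝ^{gh} × ℝ^g` be the Cayley simplex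
`conv ⋃ᵢ {μ_i(v) × e_i : v ∈ σ_i}`.  If all `σ_i` are nonempty, then the
intersection of `σ` with the plane `L = ℝ^{gh} × (1/g,…,1/g)` equals
`(1/g)(μ₁(Δ_{σ₁}) + ⋯ + μ_g(Δ_{σ_g})) × (1/g,…,1/g)`, and this set is affinely
isomorphic to the product `Δ_{σ₁} × ⋯ × Δ_{σ_g}` (an affine map restricts to a
bijection from the product onto it).  Moreover, if some `σ_j = ∅`, the simplex
does not meet `L` at all. -/
theorem cayley_slice_eq_product (g h : ℕ) (hg : 1 ≤ g)
    (σ : Fin g → Finset (Fin h))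
    (μ : Fin g → Fin h → (Fin g × Fin h → ℝ))
    (hμ : ∀ i v, μ i v = fun q => if q = (i, v) then (1 : ℝ) else 0)
    (e : Fin g → (Fin g → ℝ))
    (he : ∀ i, e i = fun j => if j = i then (1 : ℝ) else 0)
    (S : Set ((Fin g × Fin h → ℝ) × (Fin g → ℝ)))
    (hS : S = convexHull ℝ {z | ∃ i, ∃ v ∈ σ i, z = (μ i v, e i)})
    (L : Set ((Fin g × Fin h → ℝ) × (Fin g → ℝ)))
    (hL : L = {z | z.2 = fun _ => (g : ℝ)⁻¹})
    (Mink : Set (Fin g × Fin h → ℝ))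
    (hMink : Mink = {x | ∃ y : Fin g → (Fin g × Fin h → ℝ),
        (∀ i, y i ∈ convexHull ℝ (μ i '' ↑(σ i))) ∧ x = ∑ i, y i}) :
    ((∀ i, (σ i).Nonempty) →
        S ∩ L = {z | ∃ x ∈ Mink, z = ((g : ℝ)⁻¹ • x, fun _ => (g : ℝ)⁻¹)} ∧
        ∃ φ : (Fin g → (Fin g × Fin h → ℝ)) →ᵃ[ℝ]
            ((Fin g × Fin h → ℝ) × (Fin g → ℝ)),
          Set.BijOn φ {y | ∀ i, y i ∈ convexHull ℝ (μ i '' ↑(σ i))} (S ∩ L)) ∧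
      ((∃ j, σ j = ∅) → S ∩ L = ∅) := by
  classical
  subst hS hL hMink
  have hg0 : (0:ℝ) < (g:ℝ) := by exact_mod_cast Nat.lt_of_lt_of_le Nat.zero_lt_one hg
  have hgne : (g:ℝ) ≠ 0 := ne_of_gt hg0
  set Z : Set ((Fin g × Fin h → ℝ) × (Fin g → ℝ)) :=
    {z | ∃ i, ∃ v ∈ σ i, z = (μ i v, e i)} with hZ
  -- support lemma: elements of convexHull (μ i '' σ i) vanish outside block i
  have hsupp : ∀ (i : Fin g) (y : Fin g × Fin h → ℝ),
      y ∈ convexHull ℝ (μ i '' ↑(σ i)) → ∀ q : Fin g × Fin h, q.1 ≠ i → y q = 0 := by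
    intro i y hy q hq
    have hconv : Convex ℝ {y : Fin g × Fin h → ℝ | y q = 0} := by
      intro a ha b hb s t hs ht hst
      simp only [Set.mem_setOf_eq] at ha hb ⊢
      simp [ha, hb]
    have hsub : μ i '' ↑(σ i) ⊆ {y : Fin g × Fin h → ℝ | y q = 0} := by
      rintro _ ⟨v, hv, rfl⟩
      have hqe : q ≠ (i, v) := by
        intro hqe; exact hq (by rw [hqe])
      simp [hμ, hqe]
    exact convexHull_min hsub hconv hy
  -- forward direction
  have fwd : ∀ z, z ∈ convexHull ℝ Z ∩ {z : (Fin g × Fin h → ℝ) × (Fin g → ℝ) |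
        z.2 = fun _ => (g:ℝ)⁻¹} →
      ∃ y : Fin g → (Fin g × Fin h → ℝ),
        (∀ i, y i ∈ convexHull ℝ (μ i '' ↑(σ i))) ∧ z.1 = (g:ℝ)⁻¹ • ∑ i, y i := by
    rintro z ⟨hzS, hzL⟩
    rw [convexHull_eq] at hzS
    obtain ⟨ι, t, w, p, hw0, hw1, hpZ, hcm⟩ := hzS
    rw [Finset.centerMass_eq_of_sum_1 _ _ hw1] at hcm
    have hch : ∀ k ∈ t, ∃ iv : Fin g × Fin h, iv.2 ∈ σ iv.1 ∧ p k = (μ iv.1 iv.2, e iv.1) := by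
      intro k hk
      obtain ⟨i, v, hv, hpk⟩ := hpZ k hk
      exact ⟨(i, v), hv, hpk⟩
    have ht : t.Nonempty := by
      rcases Finset.eq_empty_or_nonempty t with h' | h'
      · exfalso; rw [h', Finset.sum_empty] at hw1; norm_num at hw1
      · exact h'
    obtain ⟨k₀, hk₀⟩ := ht
    let f : ι → Fin g × Fin h := fun k =>
      if hk : k ∈ t then (hch k hk).choose else (hch k₀ hk₀).choose
    have hf : ∀ k ∈ t, (f k).2 ∈ σ (f k).1 ∧ p k = (μ (f k).1 (f k).2, e (f k).1) := by
      intro k hk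
      simp only [f, dif_pos hk]
      exact ⟨(hch k hk).choose_spec.1, (hch k hk).choose_spec.2⟩
    have hfib : ∀ j : Fin g, ∑ k ∈ t.filter (fun k => (f k).1 = j), w k = (g:ℝ)⁻¹ := by
      intro j
      calc ∑ k ∈ t.filter (fun k => (f k).1 = j), w k
          = ∑ k ∈ t, if (f k).1 = j then w k else 0 := Finset.sum_filter _ _
        _ = ∑ k ∈ t, (w k • p k).2 j := by
            refine Finset.sum_congr rfl fun k hk => ?_
            rw [(hf k hk).2, he]
            by_cases hj : (f k).1 = j <;>
              simp [Prod.smul_mk, hj, Ne.symm, eq_comm]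
        _ = z.2 j := by rw [← hcm, Prod.snd_sum, Finset.sum_apply]
        _ = (g:ℝ)⁻¹ := by rw [hzL]
    refine ⟨fun i => (g:ℝ) • ∑ k ∈ t.filter (fun k => (f k).1 = i), w k • (p k).1, ?_, ?_⟩
    · intro i
      have hsum : ∑ k ∈ t.filter (fun k => (f k).1 = i), (g:ℝ) * w k = 1 := by
        rw [← Finset.mul_sum, hfib, mul_inv_cancel₀ hgne]
      have hmem := Convex.sum_mem (convex_convexHull ℝ (μ i '' ↑(σ i)))
        (t := t.filter (fun k => (f k).1 = i)) (w := fun k => (g:ℝ) * w k)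
        (z := fun k => (p k).1)
        (fun k hk => mul_nonneg (le_of_lt hg0) (hw0 k (Finset.mem_filter.mp hk).1))
        hsum ?_
      · have heq : ((g:ℝ) • ∑ k ∈ t.filter (fun k => (f k).1 = i), w k • (p k).1)
            = ∑ k ∈ t.filter (fun k => (f k).1 = i), ((g:ℝ) * w k) • (p k).1 := by
          rw [Finset.smul_sum]
          exact Finset.sum_congr rfl fun k _ => (mul_smul _ _ _).symm
        show ((g:ℝ) • ∑ k ∈ t.filter (fun k => (f k).1 = i), w k • (p k).1) ∈ _
        rw [heq]
        exact hmem
      · intro k hk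
        obtain ⟨hkt, hki⟩ := Finset.mem_filter.mp hk
        have h1 := (hf k hkt).1
        have h2 : (p k).1 = μ (f k).1 (f k).2 := by rw [(hf k hkt).2]
        apply subset_convexHull
        refine ⟨(f k).2, ?_, ?_⟩
        · rw [← hki]; exact_mod_cast h1
        · show μ i (f k).2 = (p k).1
          rw [h2, hki]
    · have hz1 : z.1 = ∑ k ∈ t, w k • (p k).1 := by
        rw [← hcm, Prod.fst_sum]
        exact Finset.sum_congr rfl fun k _ => rfl
      rw [hz1, ← Finset.sum_fiberwise t (fun k => (f k).1) (fun k => w k • (p k).1),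
        Finset.smul_sum]
      exact (Finset.sum_congr rfl fun i _ => by
        rw [smul_smul, inv_mul_cancel₀ hgne, one_smul]).symm
  -- backward direction
  have bwd : ∀ y : Fin g → (Fin g × Fin h → ℝ),
      (∀ i, y i ∈ convexHull ℝ (μ i '' ↑(σ i))) →
      (((g:ℝ)⁻¹ • ∑ i, y i, fun _ => (g:ℝ)⁻¹) :
          (Fin g × Fin h → ℝ) × (Fin g → ℝ)) ∈ convexHull ℝ Z ∩
        {z : (Fin g × Fin h → ℝ) × (Fin g → ℝ) | z.2 = fun _ => (g:ℝ)⁻¹} := by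
    intro y hy
    constructor
    · have hpair : ∀ i, ((y i, e i) : (Fin g × Fin h → ℝ) × (Fin g → ℝ)) ∈ convexHull ℝ Z := by
        intro i
        let F : (Fin g × Fin h → ℝ) →ᵃ[ℝ] (Fin g × Fin h → ℝ) × (Fin g → ℝ) :=
          { toFun := fun x => (x, e i)
            linear := LinearMap.inl ℝ _ _
            map_vadd' := fun p v => by
              simp [Prod.ext_iff, vadd_eq_add] }
        have h1 : ((y i, e i) : (Fin g × Fin h → ℝ) × (Fin g → ℝ)) ∈
            F '' (convexHull ℝ (μ i '' ↑(σ i))) := ⟨y i, hy i, rfl⟩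
        rw [AffineMap.image_convexHull] at h1
        refine convexHull_mono ?_ h1
        rintro _ ⟨x, ⟨v, hv, rfl⟩, rfl⟩
        exact ⟨i, v, hv, rfl⟩
      have hmem := Convex.sum_mem (convex_convexHull ℝ Z) (t := Finset.univ)
        (w := fun _ : Fin g => (g:ℝ)⁻¹) (z := fun i => ((y i, e i) :
          (Fin g × Fin h → ℝ) × (Fin g → ℝ)))
        (fun i _ => by positivity) ?_ (fun i _ => hpair i)
      · convert hmem using 1
        rw [Prod.ext_iff]
        constructor
        · simp [Prod.fst_sum, Finset.smul_sum]
        · rw [Prod.snd_sum]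
          funext j
          rw [Finset.sum_apply]
          simp [he, mul_ite]
      · simp [Finset.sum_const, mul_inv_cancel₀ hgne]
    · rfl
  -- the set equality
  have hset : convexHull ℝ Z ∩ {z : (Fin g × Fin h → ℝ) × (Fin g → ℝ) |
        z.2 = fun _ => (g:ℝ)⁻¹}
      = {z | ∃ x ∈ {x : Fin g × Fin h → ℝ | ∃ y : Fin g → (Fin g × Fin h → ℝ),
            (∀ i, y i ∈ convexHull ℝ (μ i '' ↑(σ i))) ∧ x = ∑ i, y i},
          z = ((g:ℝ)⁻¹ • x, fun _ => (g:ℝ)⁻¹)} := by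
    ext z
    constructor
    · intro hz
      obtain ⟨y, hy, hz1⟩ := fwd z hz
      exact ⟨∑ i, y i, ⟨y, hy, rfl⟩, Prod.ext_iff.mpr ⟨hz1, hz.2⟩⟩
    · rintro ⟨x, ⟨y, hy, rfl⟩, rfl⟩
      exact bwd y hy
  constructor
  · intro _
    refine ⟨hset, ?_⟩
    let ℓ : (Fin g → (Fin g × Fin h → ℝ)) →ₗ[ℝ] (Fin g × Fin h → ℝ) × (Fin g → ℝ) :=
      { toFun := fun y => ((g:ℝ)⁻¹ • ∑ i, y i, 0)
        map_add' := fun a b => by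
          simp [Prod.ext_iff, Finset.sum_add_distrib, smul_add]
        map_smul' := fun c a => by
          simp only [Pi.smul_apply, Prod.smul_mk, RingHom.id_apply, Prod.mk.injEq,
            smul_zero, and_true]
          rw [← Finset.smul_sum, smul_comm] }
    let φ : (Fin g → (Fin g × Fin h → ℝ)) →ᵃ[ℝ] (Fin g × Fin h → ℝ) × (Fin g → ℝ) :=
      { toFun := fun y => ((g:ℝ)⁻¹ • ∑ i, y i, fun _ => (g:ℝ)⁻¹)
        linear := ℓ
        map_vadd' := fun p v => by
          show ((g:ℝ)⁻¹ • ∑ i, (v + p) i, fun _ => (g:ℝ)⁻¹) = _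
          simp only [ℓ, vadd_eq_add, Pi.add_apply, LinearMap.coe_mk, AddHom.coe_mk,
            Prod.mk_add_mk, zero_add, Prod.mk.injEq, and_true]
          rw [Finset.sum_add_distrib, smul_add] }
    refine ⟨φ, ?_, ?_, ?_⟩
    · intro y hy
      exact bwd y hy
    · intro a ha b hb hab
      have h1 : (g:ℝ)⁻¹ • ∑ i, a i = (g:ℝ)⁻¹ • ∑ i, b i := congrArg Prod.fst hab
      have h2 : ∑ i, a i = ∑ i, b i := by
        have h3 := congrArg (fun x => (g:ℝ) • x) h1
        simpa [smul_smul, mul_inv_cancel₀ hgne] using h3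
      funext j q
      by_cases hqj : q.1 = j
      · have ha0 : ∀ i, i ≠ j → a i q = 0 := fun i hij =>
          hsupp i (a i) (ha i) q (by rw [hqj]; exact Ne.symm hij)
        have hb0 : ∀ i, i ≠ j → b i q = 0 := fun i hij =>
          hsupp i (b i) (hb i) q (by rw [hqj]; exact Ne.symm hij)
        have hA : ∑ i, a i q = a j q :=
          Finset.sum_eq_single j (fun i _ hij => ha0 i hij) (by simp)
        have hB : ∑ i, b i q = b j q :=
          Finset.sum_eq_single j (fun i _ hij => hb0 i hij) (by simp)
        have h4 := congrFun h2 q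
        simp only [Finset.sum_apply] at h4
        rw [← hA, ← hB, h4]
      · rw [hsupp j (a j) (ha j) q hqj, hsupp j (b j) (hb j) q hqj]
    · intro z hz
      rw [hset] at hz
      obtain ⟨x, ⟨y, hy, rfl⟩, rfl⟩ := hz
      exact ⟨y, hy, rfl⟩
  · rintro ⟨j, hj⟩
    ext z
    simp only [Set.mem_inter_iff, Set.mem_empty_iff_false, iff_false]
    intro hz
    obtain ⟨y, hy, _⟩ := fwd z hz
    have hyj := hy j
    rw [hj] at hyj
    simp at hyj
end

section
/- For k ≥ 3 and m ≥ 2, and for each residue x mod N (N = m(k-2)+2) and each 1 ≤ s ≤ k-1, the set σ_x(s) = { (x+j, x+j+k-1) mod N : 0 ≤ j ≤ s-1 } consists of s pairwise crossing k-allowable diagonals of the N-gon. -/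
/-- Two diagonals of a convex `N`-gon cross iff their endpoints strictly
interleave in cyclic order. -/
def Crosses {N : ℕ} [NeZero N] (e f : Sym2 (ZMod N)) : Prop :=
  ∃ a b c d : ZMod N, e = s(a, b) ∧ f = s(c, d) ∧
    ((a.val < c.val ∧ c.val < b.val ∧ b.val < d.val) ∨
     (c.val < a.val ∧ a.val < d.val ∧ d.val < b.val))

/-- A diagonal of the `N`-gon, `N = m(k-2)+2`, is `k`-allowable iff it connects
some vertex `x` with `x + (k-1) + j(k-2) (mod N)`, `0 ≤ j ≤ m-2`. -/
def Allowable (k m N : ℕ) [NeZero N] (e : Sym2 (ZMod N)) : Prop :=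
  ∃ x : ZMod N, ∃ j : ℕ, j < m - 1 ∧
    e = s(x, x + ((k - 1 : ℕ) : ZMod N) + ((j * (k - 2) : ℕ) : ZMod N))

lemma valAdd {N : ℕ} [NeZero N] (x : ZMod N) (c : ℕ) :
    (x + (c : ℕ)).val = (x.val + c) % N := by
  rw [ZMod.val_add, ZMod.val_natCast, Nat.add_mod_mod]

lemma valAdd2 {N : ℕ} [NeZero N] (x : ZMod N) (c d : ℕ) :
    (x + (c : ℕ) + (d : ℕ)).val = (x.val + (c + d)) % N := by
  rw [valAdd, valAdd, Nat.mod_add_mod, Nat.add_assoc]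

lemma order_four (N v o1 o2 o3 o4 : ℕ) (hv : v < N)
    (h12 : o1 < o2) (h23 : o2 < o3) (h34 : o3 < o4) (h4 : o4 < N) :
    ((v+o1)%N < (v+o2)%N ∧ (v+o2)%N < (v+o3)%N ∧ (v+o3)%N < (v+o4)%N) ∨
    ((v+o2)%N < (v+o3)%N ∧ (v+o3)%N < (v+o4)%N ∧ (v+o4)%N < (v+o1)%N) ∨
    ((v+o3)%N < (v+o4)%N ∧ (v+o4)%N < (v+o1)%N ∧ (v+o1)%N < (v+o2)%N) ∨
    ((v+o4)%N < (v+o1)%N ∧ (v+o1)%N < (v+o2)%N ∧ (v+o2)%N < (v+o3)%N) := by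
  have key : ∀ o, o < N → (v+o) % N = if N ≤ v + o then v + o - N else v + o := by
    intro o ho
    split
    · rw [Nat.mod_eq_sub_mod ‹_›, Nat.mod_eq_of_lt (by omega)]
    · exact Nat.mod_eq_of_lt (by omega)
  rw [key o1 (by omega), key o2 (by omega), key o3 (by omega), key o4 h4]
  split_ifs <;> omega

lemma crosses_aux (k m N : ℕ) [NeZero N] (hk : 3 ≤ k) (hm : 2 ≤ m)
    (hN : N = m * (k - 2) + 2) (x : ZMod N) (i j : ℕ) (hij : i < j) (hj : j ≤ k - 2) :
    Crosses (s(x + ((i:ℕ) : ZMod N), x + ((i:ℕ) : ZMod N) + ((k-1:ℕ) : ZMod N)))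
            (s(x + ((j:ℕ) : ZMod N), x + ((j:ℕ) : ZMod N) + ((k-1:ℕ) : ZMod N))) := by
  have hmm : 2*(k-2) ≤ m*(k-2) := Nat.mul_le_mul_right _ hm
  have hv := ZMod.val_lt x
  have h1 := valAdd x i
  have h2 := valAdd x j
  have h3 := valAdd2 x i (k-1)
  have h4 := valAdd2 x j (k-1)
  have ho := order_four N x.val i j (i+(k-1)) (j+(k-1)) hv (by omega) (by omega)
    (by omega) (by omega)
  rcases ho with ⟨c1,c2,c3⟩ | ⟨c1,c2,c3⟩ | ⟨c1,c2,c3⟩ | ⟨c1,c2,c3⟩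
  · refine ⟨x + ((i:ℕ):ZMod N), x + ((i:ℕ):ZMod N) + ((k-1:ℕ) : ZMod N),
      x + ((j:ℕ):ZMod N), x + ((j:ℕ):ZMod N) + ((k-1:ℕ) : ZMod N), rfl, rfl,
      Or.inl ⟨?_, ?_, ?_⟩⟩
    · rw [h1, h2]; exact c1
    · rw [h2, h3]; exact c2
    · rw [h3, h4]; exact c3
  · refine ⟨x + ((i:ℕ):ZMod N) + ((k-1:ℕ) : ZMod N), x + ((i:ℕ):ZMod N),
      x + ((j:ℕ):ZMod N), x + ((j:ℕ):ZMod N) + ((k-1:ℕ) : ZMod N), Sym2.eq_swap, rfl,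
      Or.inr ⟨?_, ?_, ?_⟩⟩
    · rw [h2, h3]; exact c1
    · rw [h3, h4]; exact c2
    · rw [h4, h1]; exact c3
  · refine ⟨x + ((i:ℕ):ZMod N) + ((k-1:ℕ) : ZMod N), x + ((i:ℕ):ZMod N),
      x + ((j:ℕ):ZMod N) + ((k-1:ℕ) : ZMod N), x + ((j:ℕ):ZMod N), Sym2.eq_swap, Sym2.eq_swap,
      Or.inl ⟨?_, ?_, ?_⟩⟩
    · rw [h3, h4]; exact c1
    · rw [h4, h1]; exact c2
    · rw [h1, h2]; exact c3
  · refine ⟨x + ((i:ℕ):ZMod N), x + ((i:ℕ):ZMod N) + ((k-1:ℕ) : ZMod N),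
      x + ((j:ℕ):ZMod N) + ((k-1:ℕ) : ZMod N), x + ((j:ℕ):ZMod N), rfl, Sym2.eq_swap,
      Or.inr ⟨?_, ?_, ?_⟩⟩
    · rw [h4, h1]; exact c1
    · rw [h1, h2]; exact c2
    · rw [h2, h3]; exact c3

lemma crosses_symm {N : ℕ} [NeZero N] {e f : Sym2 (ZMod N)} (h : Crosses e f) :
    Crosses f e := by
  obtain ⟨a, b, c, d, he, hf, hor⟩ := h
  exact ⟨c, d, a, b, hf, he, hor.symm⟩

/-- For `k ≥ 3`, `m ≥ 2`, `N = m(k-2)+2`, every vertex `x` of the `N`-gon and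
every `1 ≤ sz ≤ k-1`: the set
`σ_x(sz) = {(x+j, x+j+k-1) mod N : 0 ≤ j ≤ sz-1}` consists of `sz` pairwise
crossing `k`-allowable diagonals. -/
theorem sigma_pairwise_crossing (k m N : ℕ) [NeZero N]
    (hk : 3 ≤ k) (hm : 2 ≤ m) (hN : N = m * (k - 2) + 2)
    (x : ZMod N) (sz : ℕ) (hs1 : 1 ≤ sz) (hs2 : sz ≤ k - 1)
    (σ : Finset (Sym2 (ZMod N)))
    (hσ : σ = (Finset.range sz).image
      (fun j => s(x + (j : ℕ), x + (j : ℕ) + ((k - 1 : ℕ) : ZMod N)))) :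
    σ.card = sz ∧ (∀ e ∈ σ, Allowable k m N e) ∧
      ∀ e ∈ σ, ∀ f ∈ σ, e ≠ f → Crosses e f := by
  have hmm : 2*(k-2) ≤ m*(k-2) := Nat.mul_le_mul_right _ hm
  have hkN : k - 1 < N := by omega
  subst hσ
  refine ⟨?_, ?_, ?_⟩
  · rw [Finset.card_image_of_injOn, Finset.card_range]
    intro j1 hj1 j2 hj2 h
    simp only [Finset.coe_range, Set.mem_Iio] at hj1 hj2
    rw [Sym2.eq_iff] at h
    rcases h with ⟨ha, _⟩ | ⟨ha, _⟩
    · have : (j1 : ZMod N) = (j2 : ZMod N) := by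
        exact add_left_cancel ha
      have := congrArg ZMod.val this
      rw [ZMod.val_natCast, ZMod.val_natCast, Nat.mod_eq_of_lt (by omega),
        Nat.mod_eq_of_lt (by omega)] at this
      exact this
    · exfalso
      have : (j1 : ZMod N) = ((j2 + (k-1) : ℕ) : ZMod N) := by
        apply add_left_cancel (a := x)
        rw [ha]
        push_cast
        ring
      have := congrArg ZMod.val this
      rw [ZMod.val_natCast, ZMod.val_natCast, Nat.mod_eq_of_lt (by omega),
        Nat.mod_eq_of_lt (by omega)] at this
      omega
  · intro e he
    simp only [Finset.mem_image, Finset.mem_range] at he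
    obtain ⟨j, hj, rfl⟩ := he
    exact ⟨x + (j : ℕ), 0, by omega, by norm_num⟩
  · intro e he f hf hne
    simp only [Finset.mem_image, Finset.mem_range] at he hf
    obtain ⟨i, hi, rfl⟩ := he
    obtain ⟨j, hj, rfl⟩ := hf
    rcases lt_trichotomy i j with h | h | h
    · exact crosses_aux k m N hk hm hN x i j h (by omega)
    · exact absurd (by rw [h]) hne
    · exact crosses_symm (crosses_aux k m N hk hm hN x j i h (by omega))
end
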